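/- arXiv:2508.10570 — 2 statements merged into one kernel-verified Lean document; each statement's English description precedes it below -/
import Mathlib

section
/- If the signed area satisfies A > 0 and h > 0, then the consistency part of the first-order VEM element stiffness matrix, K^consis = Π*ᵀ·G̃·Π*, has rank exactly 2, for any choice of the point (x_K, y_K). -/
/-!
The `h`-scalings cancel: `G⁻¹ G̃ G⁻¹ = diag(0, h²/A, h²/A)`, so `K^consis = A⁻¹ · MᵀM` where `M` is
the `2 × N` matrix with columns `a_i`, and `rank K^consis = rank M ≤ 2`. Summation by parts over
the cyclic index shows that the `a_i` integrate the gradients of the coordinate functions exactly: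
`M · [x y] = A · I₂`, so `M` has rank `2` once `A ≠ 0`.
-/

open Matrix Real Filter

noncomputable section

/-- The boundary-integral vectors `a_i = (1/2)·(y_{i+1} − y_{i−1}, x_{i−1} − x_{i+1})`
of a planar polygon with cyclically indexed vertex coordinates. -/
def aVec (N : ℕ) (x y : ZMod N → ℝ) (i : ZMod N) : Fin 2 → ℝ :=
  ![(y (i + 1) - y (i - 1)) / 2, (x (i - 1) - x (i + 1)) / 2]

/-- The signed (shoelace) area `A = (1/2)·Σ_i (x_i y_{i+1} − x_{i+1} y_i)`. -/
def shoelace (N : ℕ) [NeZero N] (x y : ZMod N → ℝ) : ℝ :=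
  (1 / 2) * ∑ i : ZMod N, (x i * y (i + 1) - x (i + 1) * y i)

/-- The `3×N` matrix `B` of the first-order VEM. -/
def Bmat (N : ℕ) (x y : ZMod N → ℝ) (h : ℝ) : Matrix (Fin 3) (ZMod N) ℝ :=
  Matrix.of fun α i => ![(1 : ℝ) / N, aVec N x y i 0 / h, aVec N x y i 1 / h] α

/-- The `N×3` matrix `D` of the first-order VEM, `D_{iα} = m_α(x_i, y_i)` with scaled
monomials `m₁ = 1`, `m₂ = (x − x_K)/h`, `m₃ = (y − y_K)/h`. -/
def Dmat (N : ℕ) (x y : ZMod N → ℝ) (h xK yK : ℝ) : Matrix (ZMod N) (Fin 3) ℝ :=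
  Matrix.of fun i α => ![(1 : ℝ), (x i - xK) / h, (y i - yK) / h] α

/-- `G = diag(1, A/h², A/h²)`. -/
def Gmat (N : ℕ) [NeZero N] (x y : ZMod N → ℝ) (h : ℝ) : Matrix (Fin 3) (Fin 3) ℝ :=
  Matrix.diagonal ![1, shoelace N x y / h ^ 2, shoelace N x y / h ^ 2]

/-- `G̃ = diag(0, A/h², A/h²)`. -/
def Gtil (N : ℕ) [NeZero N] (x y : ZMod N → ℝ) (h : ℝ) : Matrix (Fin 3) (Fin 3) ℝ :=
  Matrix.diagonal ![0, shoelace N x y / h ^ 2, shoelace N x y / h ^ 2]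

/-- `Π* = G⁻¹·B`. -/
def PiStar (N : ℕ) [NeZero N] (x y : ZMod N → ℝ) (h : ℝ) : Matrix (Fin 3) (ZMod N) ℝ :=
  (Gmat N x y h)⁻¹ * Bmat N x y h

/-- `Π = D·Π*`. -/
def PiMat (N : ℕ) [NeZero N] (x y : ZMod N → ℝ) (h xK yK : ℝ) :
    Matrix (ZMod N) (ZMod N) ℝ :=
  Dmat N x y h xK yK * PiStar N x y h

/-- The consistency part `K^consis = Π*ᵀ·G̃·Π*` of the VEM element stiffness matrix. -/
def Kconsis (N : ℕ) [NeZero N] (x y : ZMod N → ℝ) (h : ℝ) :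
    Matrix (ZMod N) (ZMod N) ℝ :=
  (PiStar N x y h)ᵀ * Gtil N x y h * PiStar N x y h

/-- The first-order VEM element stiffness matrix
`K = Π*ᵀ·G̃·Π* + τ·(I − Π)ᵀ·(I − Π)`. -/
def Kmat (N : ℕ) [NeZero N] (x y : ZMod N → ℝ) (h τ xK yK : ℝ) :
    Matrix (ZMod N) (ZMod N) ℝ :=
  Kconsis N x y h +
    τ • ((1 - PiMat N x y h xK yK)ᵀ * (1 - PiMat N x y h xK yK))

theorem Fintype.sum_comp_sub_mul {G R : Type*} [AddGroup G] [Fintype G] [AddCommMonoid R] [Mul R]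
    (f g : G → R) (c : G) : ∑ i, f (i - c) * g i = ∑ i, f i * g (i + c) :=
  Fintype.sum_equiv (Equiv.subRight c) _ _ fun i => by simp

def aMat (N : ℕ) (x y : ZMod N → ℝ) : Matrix (Fin 2) (ZMod N) ℝ :=
  Matrix.of fun α i => aVec N x y i α

def vertexMat (N : ℕ) (x y : ZMod N → ℝ) : Matrix (ZMod N) (Fin 2) ℝ :=
  Matrix.of fun i => ![x i, y i]

section Polygon

variable {N : ℕ} [NeZero N] (x y : ZMod N → ℝ)

theorem aMat_mul_vertexMat : aMat N x y * vertexMat N x y = shoelace N x y • 1 := by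
  ext α β
  fin_cases α <;> fin_cases β <;>
    simp only [aMat, aVec, vertexMat, shoelace, Matrix.mul_apply, Matrix.smul_apply, of_apply,
      Fin.zero_eta, Fin.mk_one, Fin.isValue, cons_val_zero, cons_val_one, cons_val_fin_one,
      one_apply_eq, one_apply_ne, ne_eq, zero_ne_one, one_ne_zero, not_false_eq_true,
      smul_eq_mul, mul_one, mul_zero, sub_div, sub_mul, div_mul_eq_mul_div,
      Finset.sum_sub_distrib, ← Finset.sum_div, Fintype.sum_comp_sub_mul] <;>
    simp only [mul_comm] <;> ring

theorem rank_aMat (hA : shoelace N x y ≠ 0) : (aMat N x y).rank = 2 := by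
  refine le_antisymm (by simpa using (aMat N x y).rank_le_card_height) ?_
  calc 2 = (shoelace N x y • (1 : Matrix (Fin 2) (Fin 2) ℝ)).rank := by
        rw [rank_smul_of_mem_nonZeroDivisors _ (mem_nonZeroDivisors_of_ne_zero hA), rank_one,
          Fintype.card_fin]
    _ = (aMat N x y * vertexMat N x y).rank := by rw [aMat_mul_vertexMat]
    _ ≤ (aMat N x y).rank := rank_mul_le_left _ _

theorem Gmat_inv {h : ℝ} (hh : h ≠ 0) (hA : shoelace N x y ≠ 0) :
    (Gmat N x y h)⁻¹ = diagonal ![1, h ^ 2 / shoelace N x y, h ^ 2 / shoelace N x y] := by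
  refine inv_eq_left_inv ?_
  rw [Gmat, diagonal_mul_diagonal, ← diagonal_one]
  congr 1
  ext α
  fin_cases α <;> simp [field]

theorem Kconsis_eq {h : ℝ} (hh : h ≠ 0) (hA : shoelace N x y ≠ 0) :
    Kconsis N x y h = (shoelace N x y)⁻¹ • ((aMat N x y)ᵀ * aMat N x y) := by
  ext i j
  simp only [Kconsis, PiStar, Gmat_inv x y hh hA, Gtil, Bmat, aMat, transpose_mul,
    diagonal_transpose, Matrix.mul_apply, Matrix.smul_apply, transpose_apply, of_apply,
    Fin.sum_univ_three, Fin.sum_univ_two, Fin.isValue, cons_val_zero, cons_val_one, cons_val,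
    diagonal_apply_eq, diagonal_apply_ne, ne_eq, Fin.reduceEq, not_false_eq_true, smul_eq_mul,
    mul_zero, zero_mul, add_zero, zero_add]
  field_simp

end Polygon

theorem stmt5_general (N : ℕ) [NeZero N] (x y : ZMod N → ℝ)
    (h : ℝ) (hh : 0 < h) (hA : 0 < shoelace N x y) :
    (Kconsis N x y h).rank = 2 := by
  rw [Kconsis_eq x y hh.ne' hA.ne',
    rank_smul_of_mem_nonZeroDivisors _ (mem_nonZeroDivisors_of_ne_zero (inv_ne_zero hA.ne')),
    rank_transpose_mul_self, rank_aMat x y hA.ne']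

/-- If `A > 0` and `h > 0`, the consistency part `K^consis = Π*ᵀ·G̃·Π*` of the
first-order VEM element stiffness matrix has rank exactly `2`. -/
theorem stmt5 (N : ℕ) [NeZero N] (hN : 3 ≤ N) (x y : ZMod N → ℝ)
    (h : ℝ) (hh : 0 < h) (hA : 0 < shoelace N x y) :
    (Kconsis N x y h).rank = 2 :=
  stmt5_general N x y h hh hA

end
end

section
/- Suppose N = 3, the three vertices (x_1, y_1), (x_2, y_2), (x_3, y_3) are not collinear (equivalently the signed area A ≠ 0), h > 0, and (x_K, y_K) is the vertex centroid ((x_1+x_2+x_3)/3, (y_1+y_2+y_3)/3). Then the 3×3 matrix D is invertible and Π = D·Π* equals the 3×3 identity matrix; consequently the stabilization term τ·(I − Π)ᵀ·(I − Π) vanishes and the first-order VEM element stiffness matrix reduces to its consistency part, K = Π*ᵀ·G̃·Π*, for every τ ∈ ℝ. (On triangles the VEM stiffness matrix needs no stabilization, consistent with the consistency matrix having full rank 2 on the complement of constants only for triangles.) -/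
/-!
When `(x_K, y_K)` is the vertex centroid, `B·D = G` holds on every polygon: the first row of
`B` averages the monomials over the vertices, and the other rows pair the discrete normals
`a_i` with the linear monomials; by summation by parts over `ℤ/Nℤ` these sums are `0` or the
shoelace area. Hence `Π*·D = G⁻¹·B·D = I`. On a triangle `D` is square, so its left inverse
`Π*` is also a right inverse, i.e. `Π = D·Π* = I`, and the stabilization term vanishes.
-/

open Matrix Real Filter

noncomputable section

section Sums

variable {ι R : Type*} [Fintype ι]

theorem sum_mul_sub_const [CommRing R] (d g : ι → R) (k : R) (hd : ∑ i, d i = 0) :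
    ∑ i, d i * (g i - k) = ∑ i, d i * g i := by
  simp [mul_sub, Finset.sum_sub_distrib, ← Finset.sum_mul, hd]

theorem sum_sub_average_eq_zero [Field R] [CharZero R] [Nonempty ι] (x : ι → R) :
    ∑ i, (x i - (∑ j, x j) / Fintype.card ι) = 0 := by
  rw [Finset.sum_sub_distrib, Finset.sum_const, Finset.card_univ, nsmul_eq_mul,
    mul_div_cancel₀ _ (Nat.cast_ne_zero.mpr Fintype.card_ne_zero), sub_self]

end Sums

section CyclicSums

variable {G R : Type*} [AddCommGroup G] [Fintype G] [CommRing R]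

theorem sum_comp_add_right (f : G → R) (c : G) : ∑ i, f (i + c) = ∑ i, f i :=
  Fintype.sum_equiv (Equiv.addRight c) _ _ fun _ => rfl

theorem sum_comp_sub_right (f : G → R) (c : G) : ∑ i, f (i - c) = ∑ i, f i :=
  Fintype.sum_equiv (Equiv.subRight c) _ _ fun _ => rfl

theorem sum_sub_shift_mul (f g : G → R) (c : G) :
    ∑ i, (f (i + c) - f (i - c)) * g i = ∑ i, (g i * f (i + c) - g (i + c) * f i) := by
  have shift : ∑ i, f (i - c) * g i = ∑ i, g (i + c) * f i := by
    simpa [mul_comm] using sum_comp_sub_right (fun i => f i * g (i + c)) c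
  rw [Finset.sum_sub_distrib, ← shift, ← Finset.sum_sub_distrib]
  exact Finset.sum_congr rfl fun i _ => by ring

theorem sum_sub_shift_mul_self (f : G → R) (c : G) :
    ∑ i, (f (i + c) - f (i - c)) * f i = 0 := by
  rw [sum_sub_shift_mul]
  exact Finset.sum_eq_zero fun i _ => by ring

theorem sum_sub_shift (f : G → R) (c : G) : ∑ i, (f (i + c) - f (i - c)) = 0 := by
  rw [Finset.sum_sub_distrib, sum_comp_add_right, sum_comp_sub_right, sub_self]

end CyclicSums

section Polygon

variable {N : ℕ} [NeZero N]

theorem two_mul_shoelace_eq_sum_mul_x (x y : ZMod N → ℝ) :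
    2 * shoelace N x y = ∑ i, (y (i + 1) - y (i - 1)) * x i := by
  rw [shoelace, sum_sub_shift_mul]; ring

theorem two_mul_shoelace_eq_sum_mul_y (x y : ZMod N → ℝ) :
    2 * shoelace N x y = ∑ i, (x (i - 1) - x (i + 1)) * y i := by
  calc 2 * shoelace N x y = -∑ i, (y i * x (i + 1) - y (i + 1) * x i) := by
        rw [shoelace, ← Finset.sum_neg_distrib, ← mul_assoc, mul_one_div_cancel two_ne_zero,
          one_mul]
        exact Finset.sum_congr rfl fun i _ => by ring
    _ = ∑ i, (x (i - 1) - x (i + 1)) * y i := by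
        rw [← sum_sub_shift_mul, ← Finset.sum_neg_distrib]
        exact Finset.sum_congr rfl fun i _ => by ring

theorem Bmat_mul_Dmat (x y : ZMod N → ℝ) (h xK yK : ℝ) (hx : ∑ i, (x i - xK) = 0)
    (hy : ∑ i, (y i - yK) = 0) : Bmat N x y h * Dmat N x y h xK yK = Gmat N x y h := by
  have hdy : ∑ i, (y (i + 1) - y (i - 1)) = 0 := sum_sub_shift y 1
  have hdx : ∑ i, (x (i - 1) - x (i + 1)) = 0 := by
    simpa [← sub_eq_add_neg] using sum_sub_shift x (-1)
  have entry (d g : ZMod N → ℝ) (k : ℝ) (hd : ∑ i, d i = 0) :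
      ∑ i, d i / 2 / h * ((g i - k) / h) = (∑ i, d i * g i) / 2 / h ^ 2 := by
    rw [← sum_mul_sub_const d g k hd, Finset.sum_div, Finset.sum_div]
    exact Finset.sum_congr rfl fun i _ => by ring
  ext α β
  fin_cases α <;> fin_cases β <;>
    simp only [Bmat, Dmat, Gmat, aVec, Matrix.mul_apply, of_apply, Nat.succ_eq_add_one,
      Nat.reduceAdd, one_div, Fin.isValue, Fin.zero_eta, Fin.mk_one, Fin.reduceFinMk, cons_val,
      cons_val_zero, cons_val_one, cons_val_fin_one, mul_one, Finset.sum_const, Finset.card_univ,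
      ZMod.card, nsmul_eq_mul, mul_inv_cancel_of_invertible, ne_eq, Fin.reduceEq, zero_ne_one,
      one_ne_zero, not_false_eq_true, diagonal_apply_eq, diagonal_apply_ne]
  · rw [← Finset.mul_sum, ← Finset.sum_div, hx]; simp
  · rw [← Finset.mul_sum, ← Finset.sum_div, hy]; simp
  · rw [← Finset.sum_div, ← Finset.sum_div, hdy]; simp
  · rw [entry _ _ _ hdy, ← two_mul_shoelace_eq_sum_mul_x]; ring
  · rw [entry _ _ _ hdy, sum_sub_shift_mul_self]; simp
  · rw [← Finset.sum_div, ← Finset.sum_div, hdx]; simp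
  · have hxx : ∑ i, (x (i - 1) - x (i + 1)) * x i = 0 := by
      simpa [← sub_eq_add_neg] using sum_sub_shift_mul_self x (-1)
    rw [entry _ _ _ hdx, hxx]; simp
  · rw [entry _ _ _ hdx, ← two_mul_shoelace_eq_sum_mul_y]; ring

theorem isUnit_det_Gmat (x y : ZMod N → ℝ) {h : ℝ} (hh : h ≠ 0) (hA : shoelace N x y ≠ 0) :
    IsUnit (Gmat N x y h).det := by
  have : shoelace N x y / h ^ 2 ≠ 0 := div_ne_zero hA (pow_ne_zero 2 hh)
  simp [Gmat, Fin.prod_univ_three, this]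

theorem PiStar_mul_Dmat (x y : ZMod N → ℝ) {h xK yK : ℝ} (hh : h ≠ 0)
    (hA : shoelace N x y ≠ 0) (hx : ∑ i, (x i - xK) = 0) (hy : ∑ i, (y i - yK) = 0) :
    PiStar N x y h * Dmat N x y h xK yK = 1 := by
  rw [PiStar, Matrix.mul_assoc, Bmat_mul_Dmat x y h xK yK hx hy,
    Matrix.nonsing_inv_mul _ (isUnit_det_Gmat x y hh hA)]

end Polygon

/-- On a (noncollinear) triangle with `(x_K, y_K)` the vertex centroid, `D` is invertible
and `Π = I`, so the stabilization term vanishes and the first-order VEM element stiffness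
matrix reduces to its consistency part, for every `τ`. -/
theorem stmt19 (x y : ZMod 3 → ℝ) (h τ xK yK : ℝ) (hh : 0 < h)
    (hA : shoelace 3 x y ≠ 0)
    (hxK : xK = (∑ i : ZMod 3, x i) / 3) (hyK : yK = (∑ i : ZMod 3, y i) / 3) :
    (∃ E : Matrix (Fin 3) (ZMod 3) ℝ,
      Dmat 3 x y h xK yK * E = (1 : Matrix (ZMod 3) (ZMod 3) ℝ) ∧
      E * Dmat 3 x y h xK yK = (1 : Matrix (Fin 3) (Fin 3) ℝ)) ∧
    PiMat 3 x y h xK yK = 1 ∧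
    τ • ((1 - PiMat 3 x y h xK yK)ᵀ * (1 - PiMat 3 x y h xK yK)) = 0 ∧
    Kmat 3 x y h τ xK yK = Kconsis 3 x y h := by
  have hx : ∑ i, (x i - xK) = 0 := by simpa [hxK] using sum_sub_average_eq_zero x
  have hy : ∑ i, (y i - yK) = 0 := by simpa [hyK] using sum_sub_average_eq_zero y
  have left_inv := PiStar_mul_Dmat x y hh.ne' hA hx hy
  have hPi : PiMat 3 x y h xK yK = 1 :=
    (Matrix.mul_eq_one_comm_of_card_eq _ _ _ rfl).mp left_inv
  refine ⟨⟨PiStar 3 x y h, hPi, left_inv⟩, hPi, ?_, ?_⟩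
  · simp [hPi]
  · simp [Kmat, hPi]

end
end
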